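/- arXiv:2411.08987 — 7 statements merged into one kernel-verified Lean document; each statement's English description precedes it below -/
import Mathlib

section
/- Let p ∈ (1,∞), let f : ℝ^n → ℝ be convex, let λ > 0 and x ∈ ℝ^n. Then the function y ↦ f(y) + (1/(2λ))‖x−y‖_p² has exactly one global minimizer on ℝ^n. -/
/-!
`lpNorm p` is the norm of `PiLp p`, which is strictly convex for `1 < p < ∞` because
`t ↦ |t| ^ p` is strictly convex. Hence `y ↦ f y + c ‖x - y‖²` is strictly convex, so it has at
most one minimizer. A convex function decreases at most linearly away from a ball on which it is
bounded below, so the quadratic term makes the sum coercive, and being continuous in finite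
dimension it attains its minimum.
-/

/-- The ℓ_p norm on `ℝⁿ` for `p ∈ (1,∞)`: `‖y‖_p = (Σ_i |y_i|^p)^(1/p)`. -/
noncomputable def lpNorm {n : ℕ} (p : ℝ) (y : Fin n → ℝ) : ℝ :=
  (∑ i, |y i| ^ p) ^ (1 / p)

open Set Filter Metric

lemma StrictConvexOn.const_mul {E : Type*} [AddCommMonoid E] [Module ℝ E] {s : Set E}
    {f : E → ℝ} (hf : StrictConvexOn ℝ s f) {c : ℝ} (hc : 0 < c) :
    StrictConvexOn ℝ s fun y => c * f y := by
  refine ⟨hf.1, fun y hy z hz hyz a b ha hb hab => ?_⟩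
  have := mul_lt_mul_of_pos_left (hf.2 hy hz hyz ha hb hab) hc
  simp only [smul_eq_mul] at this ⊢
  linarith

section StrictConvexSpace

variable {E : Type*} [NormedAddCommGroup E] [NormedSpace ℝ E] [StrictConvexSpace ℝ E]

lemma StrictConvexOn.comp_norm_sub {φ : ℝ → ℝ} (hφ : StrictConvexOn ℝ (Ici 0) φ)
    (hφ_mono : StrictMonoOn φ (Ici 0)) (x : E) :
    StrictConvexOn ℝ univ fun y => φ ‖y - x‖ := by
  refine ⟨convex_univ, fun y _ z _ hyz a b ha hb hab => ?_⟩
  have hcombo : a • y + b • z - x = a • (y - x) + b • (z - x) := by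
    rw [smul_sub, smul_sub, sub_add_sub_comm, ← add_smul, hab, one_smul]
  have hne : y - x ≠ z - x := fun h => hyz (sub_left_injective h)
  simp only [smul_eq_mul, hcombo]
  rcases eq_or_ne ‖y - x‖ ‖z - x‖ with heq | hne_norm
  · have hlt : ‖a • (y - x) + b • (z - x)‖ < ‖y - x‖ :=
      norm_combo_lt_of_ne le_rfl heq.ge hne ha hb hab
    calc φ ‖a • (y - x) + b • (z - x)‖ < φ ‖y - x‖ :=
          hφ_mono (norm_nonneg _) (norm_nonneg _) hlt
      _ = a * φ ‖y - x‖ + b * φ ‖z - x‖ := by rw [← heq, ← add_mul, hab, one_mul]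
  · have htri : ‖a • (y - x) + b • (z - x)‖ ≤ a * ‖y - x‖ + b * ‖z - x‖ := by
      refine (norm_add_le _ _).trans_eq ?_
      rw [norm_smul_of_nonneg ha.le, norm_smul_of_nonneg hb.le]
    calc φ ‖a • (y - x) + b • (z - x)‖ ≤ φ (a * ‖y - x‖ + b * ‖z - x‖) :=
          hφ_mono.monotoneOn (norm_nonneg _) (mem_Ici.mpr (by positivity)) htri
      _ < a * φ ‖y - x‖ + b * φ ‖z - x‖ := by
          simpa using hφ.2 (norm_nonneg (y - x)) (norm_nonneg (z - x)) hne_norm ha hb hab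

end StrictConvexSpace

open scoped ENNReal in
theorem PiLp.strictConvexSpace {ι : Type*} [Fintype ι] {β : ι → Type*}
    [∀ i, NormedAddCommGroup (β i)] [∀ i, NormedSpace ℝ (β i)]
    [∀ i, StrictConvexSpace ℝ (β i)]
    {q : ℝ≥0∞} [Fact (1 ≤ q)] (hq : 1 < q.toReal) : StrictConvexSpace ℝ (PiLp q β) := by
  have hq0 : 0 < q.toReal := zero_lt_one.trans hq
  have norm_rpow (v : PiLp q β) : ‖v‖ ^ q.toReal = ∑ i, ‖v i‖ ^ q.toReal := by
    rw [PiLp.norm_eq_sum hq0, ← Real.rpow_mul (by positivity), one_div_mul_cancel hq0.ne',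
      Real.rpow_one]
  have hconv (i : ι) : StrictConvexOn ℝ univ fun u : β i => ‖u‖ ^ q.toReal := by
    simpa using (strictConvexOn_rpow hq).comp_norm_sub
      (Real.strictMonoOn_rpow_Ici_of_exponent_pos hq0) (0 : β i)
  refine StrictConvexSpace.of_norm_combo_lt_one fun v w hv hw hvw =>
    ⟨1 / 2, 1 / 2, by norm_num, ?_⟩
  obtain ⟨j, hj⟩ : ∃ j, v j ≠ w j := by
    by_contra! h
    exact hvw (WithLp.ofLp_injective q (funext h))
  have hsum : ‖(1 / 2 : ℝ) • v + (1 / 2 : ℝ) • w‖ ^ q.toReal < 1 := by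
    calc ‖(1 / 2 : ℝ) • v + (1 / 2 : ℝ) • w‖ ^ q.toReal
        = ∑ i, ‖(1 / 2 : ℝ) • v i + (1 / 2 : ℝ) • w i‖ ^ q.toReal := norm_rpow _
      _ < ∑ i, ((1 / 2 : ℝ) * ‖v i‖ ^ q.toReal + (1 / 2 : ℝ) * ‖w i‖ ^ q.toReal) := by
          refine Finset.sum_lt_sum (fun i _ => ?_) ⟨j, Finset.mem_univ j, ?_⟩
          · simpa using (hconv i).convexOn.2 trivial trivial (by norm_num) (by norm_num)
              (by norm_num)
          · simpa using (hconv j).2 trivial trivial hj (by norm_num) (by norm_num) (by norm_num)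
      _ = 1 := by
          rw [Finset.sum_add_distrib, ← Finset.mul_sum, ← Finset.mul_sum, ← norm_rpow,
            ← norm_rpow, hv, hw, Real.one_rpow]; norm_num
  by_contra! h
  exact hsum.not_ge (Real.one_le_rpow h hq0.le)

lemma lpNorm_eq_norm_toLp {n : ℕ} {p : ℝ} (hp : 0 < p) (y : Fin n → ℝ) :
    lpNorm p y = ‖WithLp.toLp (ENNReal.ofReal p) y‖ := by
  rw [PiLp.norm_eq_sum (by rwa [ENNReal.toReal_ofReal hp.le]), ENNReal.toReal_ofReal hp.le]
  simp [lpNorm, Real.norm_eq_abs]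

section NormedSpace

variable {E : Type*} [NormedAddCommGroup E] [NormedSpace ℝ E]

lemma ConvexOn.sub_mul_norm_sub_le {f : E → ℝ} (hf : ConvexOn ℝ univ f) {x : E} {m : ℝ}
    (hm : ∀ z ∈ closedBall x 1, m ≤ f z) (y : E) : m - (f x - m) * ‖y - x‖ ≤ f y := by
  have hfx : m ≤ f x := hm x (mem_closedBall_self zero_le_one)
  rcases le_or_gt ‖y - x‖ 1 with hy | hy
  · have := hm y (mem_closedBall_iff_norm.mpr hy)
    nlinarith [norm_nonneg (y - x)]
  · set t := ‖y - x‖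
    have ht : 0 < t := one_pos.trans hy
    -- the point of the unit sphere around `x` on the segment from `x` to `y`
    have hz : (1 - t⁻¹) • x + t⁻¹ • y ∈ closedBall x 1 := by
      rw [mem_closedBall_iff_norm, show (1 - t⁻¹) • x + t⁻¹ • y - x = t⁻¹ • (y - x) by
        rw [sub_smul, one_smul, smul_sub]; abel, norm_smul_of_nonneg (by positivity),
        inv_mul_cancel₀ ht.ne']
    have hconv := hf.2 (mem_univ x) (mem_univ y) (sub_nonneg.mpr (inv_le_one_of_one_le₀ hy.le))
      (inv_nonneg.mpr ht.le) (sub_add_cancel 1 t⁻¹)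
    have key : t * m ≤ (t - 1) * f x + f y := by
      calc t * m ≤ t * ((1 - t⁻¹) * f x + t⁻¹ * f y) :=
            mul_le_mul_of_nonneg_left ((hm _ hz).trans hconv) ht.le
        _ = (t - 1) * f x + f y := by field_simp
    nlinarith

lemma ConvexOn.tendsto_add_mul_norm_sub_sq_cocompact [FiniteDimensional ℝ E] {f : E → ℝ}
    (hf : ConvexOn ℝ univ f) {c : ℝ} (hc : 0 < c) (x : E) :
    Tendsto (fun y => f y + c * ‖y - x‖ ^ 2) (cocompact E) atTop := by
  obtain ⟨z₀, -, hz₀⟩ := (isCompact_closedBall x 1).exists_isMinOn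
    (nonempty_closedBall.mpr zero_le_one) hf.locallyLipschitz.continuous.continuousOn
  set m := f z₀
  set M := f x - m
  have hquad : Tendsto (fun t : ℝ => m - M * t + c * t ^ 2) atTop atTop := by
    have h : Tendsto (fun t : ℝ => t * (c * t - M)) atTop atTop :=
      tendsto_id.atTop_mul_atTop₀
        (tendsto_atTop_add_const_right _ _ (tendsto_id.const_mul_atTop hc))
    refine (tendsto_atTop_add_const_left _ m h).congr fun t => ?_
    ring
  have hdist : Tendsto (fun y => ‖y - x‖) (cocompact E) atTop := by
    simpa only [dist_eq_norm] using tendsto_dist_right_cocompact_atTop x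
  refine tendsto_atTop_mono (fun y => ?_) (hquad.comp hdist)
  have := hf.sub_mul_norm_sub_le (fun z hz => hz₀ hz) y
  simp only [Function.comp_apply]
  linarith

end NormedSpace

lemma StrictConvexOn.existsUnique_forall_le {E : Type*} [TopologicalSpace E] [Nonempty E]
    [AddCommMonoid E] [Module ℝ E] {g : E → ℝ} (hg : StrictConvexOn ℝ univ g)
    (hg_cont : Continuous g) (hg_coercive : Tendsto g (cocompact E) atTop) :
    ∃! y₀, ∀ y, g y₀ ≤ g y := by
  obtain ⟨y₀, hy₀⟩ := hg_cont.exists_forall_le hg_coercive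
  exact ⟨y₀, hy₀, fun y₁ hy₁ =>
    hg.eq_of_isMinOn (fun y _ => hy₁ y) (fun y _ => hy₀ y) trivial trivial⟩

theorem ConvexOn.existsUnique_forall_add_mul_norm_sub_sq_le {E : Type*} [NormedAddCommGroup E]
    [NormedSpace ℝ E] [FiniteDimensional ℝ E] [StrictConvexSpace ℝ E] {f : E → ℝ}
    (hf : ConvexOn ℝ univ f) {c : ℝ} (hc : 0 < c) (x : E) :
    ∃! y₀, ∀ y, f y₀ + c * ‖x - y₀‖ ^ 2 ≤ f y + c * ‖x - y‖ ^ 2 := by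
  simp only [norm_sub_rev x]
  have hsq : StrictConvexOn ℝ univ fun y : E => c * ‖y - x‖ ^ 2 :=
    (((strictConvexOn_pow le_rfl).comp_norm_sub
      (pow_left_strictMonoOn₀ two_ne_zero) x).const_mul hc)
  refine StrictConvexOn.existsUnique_forall_le (hf.add_strictConvexOn hsq) ?_
    (hf.tendsto_add_mul_norm_sub_sq_cocompact hc x)
  exact hf.locallyLipschitz.continuous.add (by fun_prop)

/-- For `p ∈ (1,∞)`, a convex `f : ℝⁿ → ℝ`, `λ > 0` and `x ∈ ℝⁿ`, the function
`y ↦ f(y) + (1/(2λ))‖x−y‖_p²` has exactly one global minimizer. -/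
theorem stmt3 {n : ℕ} (p : ℝ) (hp1 : 1 < p)
    (f : (Fin n → ℝ) → ℝ) (hf : ConvexOn ℝ Set.univ f)
    (lam : ℝ) (hlam : 0 < lam) (x : Fin n → ℝ) :
    ∃! y₀ : Fin n → ℝ, ∀ y,
      f y₀ + 1 / (2 * lam) * lpNorm p (x - y₀) ^ 2 ≤
        f y + 1 / (2 * lam) * lpNorm p (x - y) ^ 2 := by
  set q := ENNReal.ofReal p
  have hq : 1 < q.toReal := by rwa [ENNReal.toReal_ofReal (by linarith)]
  have : Fact (1 ≤ q) := ⟨ENNReal.one_le_ofReal.mpr hp1.le⟩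
  have := PiLp.strictConvexSpace (β := fun _ : Fin n => ℝ) hq
  have hf' : ConvexOn ℝ univ (f ∘ WithLp.ofLp (p := q)) :=
    hf.comp_linearMap (WithLp.linearEquiv q ℝ (Fin n → ℝ)).toLinearMap
  simp only [lpNorm_eq_norm_toLp (zero_lt_one.trans hp1), WithLp.toLp_sub]
  obtain ⟨y₀, hy₀, huniq⟩ := hf'.existsUnique_forall_add_mul_norm_sub_sq_le
    (by positivity : 0 < 1 / (2 * lam)) (WithLp.toLp q x)
  refine ⟨y₀.ofLp, fun y => hy₀ (WithLp.toLp q y), fun y hy => ?_⟩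
  exact congrArg WithLp.ofLp (huniq (WithLp.toLp q y) fun z => hy z.ofLp)
end

section
/- Let ‖·‖ be a norm on ℝ^n with dual norm ‖·‖_*, let f : ℝ^n → ℝ be convex, let λ > 0 and x ∈ ℝ^n, and suppose y₀ is a global minimizer of y ↦ f(y) + (1/(2λ))‖x−y‖². Then there exists g ∈ ∂f(y₀) such that ‖g‖_* = (1/λ)‖x−y₀‖ and ⟨g, x−y₀⟩ = (1/λ)‖x−y₀‖². -/
/-!
At a minimizer `y₀` of `f + h` with `f` continuous, separating the open strict epigraph of `f`
from the hypograph of `f y₀ + h y₀ - h` yields a linear `ℓ` with `ℓ ∈ ∂f(y₀)` and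
`-ℓ ∈ ∂h(y₀)`. For `h y = N (x - y) ^ 2 / (2λ)` this says `ℓ ∈ ∂(N² / (2λ))(w)` with
`w = x - y₀`, and the subgradient inequality at `w + t • u` and `(1 - t) • w`, as `t → 0⁺`,
gives `λ ℓ u ≤ N w * N u` and `λ ℓ w = N w ^ 2`; so `ℓ` has dual norm `N w / λ`, attained at
`w / N w`.
-/

/-- The dual norm of a norm `N` on `ℝⁿ`: `‖g‖_* = sup{⟨g,u⟩ : ‖u‖ ≤ 1}`. -/
noncomputable def dualNorm {n : ℕ} (N : (Fin n → ℝ) → ℝ) (g : Fin n → ℝ) : ℝ :=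
  sSup ((fun u : Fin n → ℝ => ∑ i, g i * u i) '' {u | N u ≤ 1})

open Set

lemma le_of_forall_pos_le_add_mul {a b C : ℝ} (h : ∀ t > 0, a ≤ b + t * C) : a ≤ b := by
  refine le_of_forall_pos_le_add fun ε hε => ?_
  rcases le_or_gt C 0 with hC | hC
  · linarith [h 1 one_pos]
  · simpa [div_mul_cancel₀ ε hC.ne'] using h (ε / C) (div_pos hε hC)

def HasSubgradientAt {E : Type*} [AddCommGroup E] [Module ℝ E] (f : E → ℝ) (ℓ : E →ₗ[ℝ] ℝ)
    (x : E) : Prop :=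
  ∀ z, f x + ℓ (z - x) ≤ f z

section Subgradient

variable {E : Type*} [AddCommGroup E] [Module ℝ E]

lemma HasSubgradientAt.of_comp_const_sub {q : E → ℝ} {ℓ : E →ₗ[ℝ] ℝ} {x y₀ : E}
    (h : HasSubgradientAt (fun y => q (x - y)) ℓ y₀) : HasSubgradientAt q (-ℓ) (x - y₀) := by
  intro z
  have := h (x - z)
  simp only [sub_sub_cancel] at this
  rwa [show x - z - y₀ = -(z - (x - y₀)) by abel, map_neg, ← LinearMap.neg_apply] at this

variable [TopologicalSpace E]

lemma StrongDual.apply_prod (L : StrongDual ℝ (E × ℝ)) (y : E) (t : ℝ) :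
    L (y, t) = L (y, 0) + t * L (0, 1) := by
  rw [← smul_eq_mul, ← map_smul, ← map_add, Prod.smul_mk, smul_zero, smul_eq_mul, mul_one,
    Prod.mk_add_mk, add_zero, zero_add]

variable [IsTopologicalAddGroup E] [ContinuousSMul ℝ E]

theorem IsMinOn.exists_hasSubgradientAt_and_neg {f h : E → ℝ} {y₀ : E}
    (hf : ConvexOn ℝ univ f) (hfc : Continuous f) (hh : ConvexOn ℝ univ h)
    (hmin : IsMinOn (f + h) univ y₀) :
    ∃ ℓ : E →ₗ[ℝ] ℝ, HasSubgradientAt f ℓ y₀ ∧ HasSubgradientAt h (-ℓ) y₀ := by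
  have hA : IsOpen {p : E × ℝ | p.1 ∈ univ ∧ f p.1 < p.2} := by
    simpa using isOpen_lt (hfc.comp continuous_fst) continuous_snd
  have hB := ((concaveOn_const (f y₀ + h y₀) convex_univ).sub hh).convex_hypograph
  have hdisj : Disjoint {p : E × ℝ | p.1 ∈ univ ∧ f p.1 < p.2}
      {p : E × ℝ | p.1 ∈ univ ∧ p.2 ≤ (fun _ => f y₀ + h y₀) p.1 - h p.1} :=
    disjoint_left.2 fun p hpA hpB => by
      have := isMinOn_univ_iff.1 hmin p.1
      simp only [Pi.add_apply, mem_ofPred_eq] at this hpA hpB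
      linarith
  obtain ⟨L, s, hLA, hLB⟩ := geometric_hahn_banach_open hf.convex_strict_epigraph hA hB hdisj
  have hLy₀ : s ≤ L (y₀, 0) + f y₀ * L (0, 1) := by
    rw [← StrongDual.apply_prod]
    exact hLB (y₀, f y₀) ⟨trivial, by simp⟩
  have hc : L (0, 1) < 0 := by
    have := hLA (y₀, f y₀ + 1) ⟨trivial, by simp⟩
    rw [StrongDual.apply_prod] at this
    linarith
  have hepi : ∀ y, L (y, 0) + f y * L (0, 1) ≤ s := fun y =>
    le_of_forall_pos_le_add_mul (C := -L (0, 1)) fun t ht => by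
      have := hLA (y, f y + t) ⟨trivial, by simpa using ht⟩
      rw [StrongDual.apply_prod] at this
      linarith
  have hhypo : ∀ y, s ≤ L (y, 0) + (f y₀ + h y₀ - h y) * L (0, 1) := fun y => by
    rw [← StrongDual.apply_prod]
    exact hLB (y, f y₀ + h y₀ - h y) ⟨trivial, le_rfl⟩
  have hL : ∀ y, L (y - y₀, 0) = L (y, 0) - L (y₀, 0) := fun y => by
    rw [← map_sub, Prod.mk_sub_mk, sub_zero]
  refine ⟨(-L (0, 1))⁻¹ • (L.comp (ContinuousLinearMap.inl ℝ E ℝ)).toLinearMap,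
    fun y => ?_, fun y => ?_⟩
  · have : (-L (0, 1))⁻¹ * L (y - y₀, 0) ≤ f y - f y₀ := by
      rw [inv_mul_le_iff₀ (neg_pos.2 hc), hL]
      linarith [hepi y]
    simpa using (by linarith : f y₀ + (-L (0, 1))⁻¹ * L (y - y₀, 0) ≤ f y)
  · have : h y₀ - h y ≤ (-L (0, 1))⁻¹ * L (y - y₀, 0) := by
      rw [le_inv_mul_iff₀ (neg_pos.2 hc), hL]
      linarith [hepi y₀, hhypo y]
    simpa using (by linarith : h y₀ - (-L (0, 1))⁻¹ * L (y - y₀, 0) ≤ h y)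

end Subgradient

namespace Seminorm

variable {E : Type*} [AddCommGroup E] [Module ℝ E] (p : Seminorm ℝ E) {lam : ℝ} {ℓ : E →ₗ[ℝ] ℝ}
  {w : E}

lemma convexOn_sq_comp_const_sub (x : E) {c : ℝ} (hc : 0 ≤ c) :
    ConvexOn ℝ univ fun y => c * p (x - y) ^ 2 :=
  ((p.convexOn.pow (fun _ _ => apply_nonneg p _) 2).smul hc).comp_affineMap
    (AffineMap.const ℝ E x - AffineMap.id ℝ E)

variable (hlam : 0 < lam) (hℓ : HasSubgradientAt (fun z => 1 / (2 * lam) * p z ^ 2) ℓ w)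
include hlam hℓ

lemma mul_apply_le_of_hasSubgradientAt_sq (u : E) : lam * ℓ u ≤ p w * p u := by
  refine le_of_forall_pos_le_add_mul (C := p u ^ 2 / 2) fun t ht => ?_
  have hsub := hℓ (w + t • u)
  have htri : p (w + t • u) ≤ p w + t * p u := by
    simpa [map_smul_eq_mul, abs_of_pos ht] using map_add_le_add p w (t • u)
  have hsq : p (w + t • u) ^ 2 ≤ (p w + t * p u) ^ 2 := pow_le_pow_left₀ (apply_nonneg _ _) htri 2
  rw [add_sub_cancel_left, map_smul, smul_eq_mul] at hsub
  field_simp at hsub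
  nlinarith

lemma mul_apply_self_of_hasSubgradientAt_sq : lam * ℓ w = p w ^ 2 := by
  refine le_antisymm (by simpa [sq] using p.mul_apply_le_of_hasSubgradientAt_sq hlam hℓ w) ?_
  refine le_of_forall_pos_le_add_mul (C := p w ^ 2 / 2) fun t ht => ?_
  have hsub := hℓ ((1 - t) • w)
  dsimp only at hsub
  rw [show (1 - t) • w - w = -(t • w) by rw [sub_smul, one_smul]; abel, map_neg, map_smul,
    map_smul_eq_mul, mul_pow, Real.norm_eq_abs, sq_abs, smul_eq_mul] at hsub
  field_simp at hsub
  nlinarith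

end Seminorm

lemma LinearMap.sum_apply_single_mul {ι R : Type*} [Fintype ι] [DecidableEq ι] [CommSemiring R]
    (ℓ : (ι → R) →ₗ[R] R) (v : ι → R) : ∑ i, ℓ (Pi.single i 1) * v i = ℓ v := by
  conv_rhs => rw [pi_eq_sum_univ' v]
  simp [map_sum, mul_comm]

lemma dualNorm_eq_of_hasSubgradientAt_sq {n : ℕ} (p : Seminorm ℝ (Fin n → ℝ)) {lam : ℝ}
    (hlam : 0 < lam) {ℓ : (Fin n → ℝ) →ₗ[ℝ] ℝ} {w : Fin n → ℝ}
    (hℓ : HasSubgradientAt (fun z => 1 / (2 * lam) * p z ^ 2) ℓ w) :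
    dualNorm p (fun i => ℓ (Pi.single i 1)) = p w / lam := by
  refine IsGreatest.csSup_eq ⟨?_, ?_⟩
  · rcases (apply_nonneg p w).eq_or_lt with hw | hw
    · exact ⟨0, by simp, by simp [← hw]⟩
    · refine ⟨(p w)⁻¹ • w, ?_, ?_⟩
      · simp [map_smul_eq_mul, abs_of_pos hw, hw.ne']
      · have := p.mul_apply_self_of_hasSubgradientAt_sq hlam hℓ
        simp only [ℓ.sum_apply_single_mul, map_smul, smul_eq_mul]
        field_simp
        linarith
  · rintro _ ⟨u, hu, rfl⟩
    dsimp only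
    rw [ℓ.sum_apply_single_mul, le_div_iff₀ hlam, mul_comm]
    calc lam * ℓ u ≤ p w * p u := p.mul_apply_le_of_hasSubgradientAt_sq hlam hℓ u
      _ ≤ p w := mul_le_of_le_one_right (apply_nonneg p w) hu

theorem stmt7_general {n : ℕ} (N : (Fin n → ℝ) → ℝ)
    (hN_triangle : ∀ x y, N (x + y) ≤ N x + N y)
    (hN_smul : ∀ (a : ℝ) (x : Fin n → ℝ), N (a • x) = |a| * N x)
    (f : (Fin n → ℝ) → ℝ) (hf : ConvexOn ℝ Set.univ f)
    (lam : ℝ) (hlam : 0 < lam)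
    (x y₀ : Fin n → ℝ)
    (hy₀ : ∀ y, f y₀ + 1 / (2 * lam) * N (x - y₀) ^ 2 ≤ f y + 1 / (2 * lam) * N (x - y) ^ 2) :
    ∃ g : Fin n → ℝ,
      (∀ z, f z ≥ f y₀ + ∑ i, g i * (z - y₀) i) ∧
      dualNorm N g = (1 / lam) * N (x - y₀) ∧
      (∑ i, g i * (x - y₀) i) = (1 / lam) * N (x - y₀) ^ 2 := by
  let p : Seminorm ℝ (Fin n → ℝ) := .of N hN_triangle fun a v => by rw [hN_smul, Real.norm_eq_abs]
  have hmin : IsMinOn (f + fun y => 1 / (2 * lam) * p (x - y) ^ 2) univ y₀ :=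
    isMinOn_univ_iff.2 hy₀
  obtain ⟨ℓ, hℓf, hℓq⟩ := hmin.exists_hasSubgradientAt_and_neg hf
    (continuousOn_univ.1 (hf.continuousOn isOpen_univ))
    (p.convexOn_sq_comp_const_sub x (by positivity))
  have hℓ := hℓq.of_comp_const_sub (q := fun z => 1 / (2 * lam) * p z ^ 2)
  rw [neg_neg] at hℓ
  refine ⟨fun i => ℓ (Pi.single i 1), fun z => ?_, ?_, ?_⟩
  · rw [ℓ.sum_apply_single_mul]
    exact hℓf z
  · rw [one_div_mul_eq_div]
    exact dualNorm_eq_of_hasSubgradientAt_sq p hlam hℓ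
  · rw [ℓ.sum_apply_single_mul, one_div_mul_eq_div, eq_div_iff hlam.ne', mul_comm]
    exact p.mul_apply_self_of_hasSubgradientAt_sq hlam hℓ

/-- If `y₀` minimizes `y ↦ f(y) + (1/(2λ))‖x−y‖²`, then there exists a subgradient
`g ∈ ∂f(y₀)` with `‖g‖_* = (1/λ)‖x−y₀‖` and `⟨g, x−y₀⟩ = (1/λ)‖x−y₀‖²`. -/
theorem stmt7 {n : ℕ} (N : (Fin n → ℝ) → ℝ)
    (hN_triangle : ∀ x y, N (x + y) ≤ N x + N y)
    (hN_smul : ∀ (a : ℝ) (x : Fin n → ℝ), N (a • x) = |a| * N x)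
    (hN_def : ∀ x, N x = 0 ↔ x = 0)
    (f : (Fin n → ℝ) → ℝ) (hf : ConvexOn ℝ Set.univ f)
    (lam : ℝ) (hlam : 0 < lam)
    (x y₀ : Fin n → ℝ)
    (hy₀ : ∀ y, f y₀ + 1 / (2 * lam) * N (x - y₀) ^ 2 ≤ f y + 1 / (2 * lam) * N (x - y) ^ 2) :
    ∃ g : Fin n → ℝ,
      (∀ z, f z ≥ f y₀ + ∑ i, g i * (z - y₀) i) ∧
      dualNorm N g = (1 / lam) * N (x - y₀) ∧
      (∑ i, g i * (x - y₀) i) = (1 / lam) * N (x - y₀) ^ 2 :=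
  stmt7_general N hN_triangle hN_smul f hf lam hlam x y₀ hy₀
end

section
/- Let r > 1, A ≥ 0 and a > 0 satisfy a^{r/(r−1)} = a + A. Then (a + A)^{1/r} ≥ A^{1/r} + 1/r. -/
/-!
Put `t = a^{1/(r-1)}`. Then `a = t^{r-1}`, `a + A = t^r` and hence `A = t^{r-1} (t - 1)`, so the claim
becomes `t^{(r-1)/r} (t-1)^{1/r} ≤ t - 1/r`, which is the weighted AM-GM inequality with weights
`(r-1)/r` and `1/r`.
-/

open Real

lemma rpow_sub_one_mul_sub_one_rpow_one_div_le {r t : ℝ} (hr : 1 ≤ r) (ht : 1 ≤ t) :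
    (t ^ (r - 1) * (t - 1)) ^ (1 / r) ≤ t - 1 / r := by
  have hr0 : 0 < r := by linarith
  have ht0 : 0 ≤ t := by linarith
  have hsplit : (t ^ (r - 1) * (t - 1)) ^ (1 / r) = t ^ ((r - 1) / r) * (t - 1) ^ (1 / r) := by
    rw [mul_rpow (rpow_nonneg ht0 _) (by linarith), ← rpow_mul ht0, mul_one_div]
  have hweights : (r - 1) / r + 1 / r = 1 := by field_simp; ring
  calc (t ^ (r - 1) * (t - 1)) ^ (1 / r)
      = t ^ ((r - 1) / r) * (t - 1) ^ (1 / r) := hsplit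
    _ ≤ (r - 1) / r * t + 1 / r * (t - 1) :=
        geom_mean_le_arith_mean2_weighted (div_nonneg (by linarith) hr0.le) (by positivity)
          ht0 (by linarith) hweights
    _ = t - 1 / r := by field_simp; ring

/-- If `r > 1`, `A ≥ 0` and `a > 0` satisfy `a^{r/(r−1)} = a + A`, then
`(a + A)^{1/r} ≥ A^{1/r} + 1/r`. -/
theorem stmt9 (r A a : ℝ) (hr : 1 < r) (hA : 0 ≤ A) (ha : 0 < a)
    (h : a ^ (r / (r - 1)) = a + A) :
    (a + A) ^ (1 / r) ≥ A ^ (1 / r) + 1 / r := by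
  have hr1 : r - 1 ≠ 0 := by linarith
  set t := a ^ (r - 1)⁻¹ with ht
  have ht0 : 0 < t := rpow_pos_of_pos ha _
  have ha_eq : t ^ (r - 1) = a := rpow_inv_rpow ha.le hr1
  have hsum : a + A = t ^ r := by
    rw [← h, ht, ← rpow_mul ha.le, inv_mul_eq_div]
  have hA_eq : A = t ^ (r - 1) * (t - 1) := by
    have : t ^ r = t ^ (r - 1) * t := by rw [← rpow_add_one ht0.ne', sub_add_cancel]
    rw [mul_sub_one, ← this, ← hsum, ha_eq]; ring
  have ht1 : 1 ≤ t := by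
    have := nonneg_of_mul_nonneg_right (hA_eq ▸ hA) (rpow_pos_of_pos ht0 _)
    linarith
  have hlhs : (a + A) ^ (1 / r) = t := by
    rw [hsum, ← rpow_mul ht0.le, mul_one_div_cancel (by linarith), rpow_one]
  rw [hlhs, hA_eq]
  linarith [rpow_sub_one_mul_sub_one_rpow_one_div_le hr.le ht1]
end

section
/- Let μ > 0, s ≥ 0, d ≥ 1, and let u, u' ∈ ℝ^d satisfy ‖u − u'‖_∞ ≤ s. Then for all integers 1 ≤ j ≤ i ≤ d: smax^{≤i}_μ(u) − smax^{≤j}_μ(u) ≥ e^{−2s/μ}·(smax^{≤i}_μ(u') − smax^{≤j}_μ(u')). -/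
open Finset

/-- The partial softmax `smax^{≤n}_μ(x) = μ·ln(Σ_{i=1}^n exp(x_i/μ))` (over the first
`n` coordinates). -/
noncomputable def psmax {d : ℕ} (μ : ℝ) (n : ℕ) (x : Fin d → ℝ) : ℝ :=
  μ * Real.log (∑ i ∈ univ.filter (fun i : Fin d => (i : ℕ) < n), Real.exp (x i / μ))

/-!
Write `A = Σ_{k ≤ j} e^{x_k}` and `D = Σ_{j < k ≤ i} e^{x_k}`, so that the increment of the
partial log-sum-exp is `log (1 + D / A)`. Moving `x` by at most `t` in sup norm changes `D` and
`A` by factors in `[e^{-t}, e^{t}]`, hence `D / A ≥ e^{-2t} D' / A'`. Concavity of `log` gives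
`c log (1 + y) ≤ log (1 + c y)` for `c ∈ [0, 1]`, which turns this into the claim with
`c = e^{-2t}`, `t = s / μ`.
-/

namespace Real

theorem mul_log_one_add_le_log_one_add_mul {c y : ℝ} (hc₀ : 0 ≤ c) (hc₁ : c ≤ 1)
    (hy : -1 < y) : c * log (1 + y) ≤ log (1 + c * y) := by
  have := strictConcaveOn_log_Ioi.concaveOn.2 (Set.mem_Ioi.mpr one_pos)
    (Set.mem_Ioi.mpr (by linarith : (0 : ℝ) < 1 + y)) (sub_nonneg.mpr hc₁) hc₀
    (sub_add_cancel 1 c)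
  simp only [smul_eq_mul, log_one, mul_zero, zero_add] at this
  rwa [show 1 + c * y = (1 - c) * 1 + c * (1 + y) by ring]

end Real

section LogSumExp

variable {ι : Type*} {S T : Finset ι} {x x' : ι → ℝ} {t : ℝ}

theorem log_sum_exp_sub_log_sum_exp [DecidableEq ι] (hTS : T ⊆ S) (hT : T.Nonempty) :
    Real.log (∑ k ∈ S, Real.exp (x k)) - Real.log (∑ k ∈ T, Real.exp (x k)) =
      Real.log (1 + (∑ k ∈ S \ T, Real.exp (x k)) / ∑ k ∈ T, Real.exp (x k)) := by
  have hA : 0 < ∑ k ∈ T, Real.exp (x k) := sum_pos (fun k _ ↦ Real.exp_pos _) hT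
  rw [← Real.log_div (hA.trans_le (sum_le_sum_of_subset_of_nonneg hTS
    fun k _ _ ↦ (Real.exp_pos _).le)).ne' hA.ne', ← sum_sdiff hTS]
  congr 1
  field_simp
  ring

theorem exp_neg_mul_sum_exp_le (h : ∀ k ∈ S, |x k - x' k| ≤ t) :
    Real.exp (-t) * ∑ k ∈ S, Real.exp (x' k) ≤ ∑ k ∈ S, Real.exp (x k) := by
  rw [mul_sum]
  refine sum_le_sum fun k hk ↦ ?_
  rw [← Real.exp_add, Real.exp_le_exp]
  linarith [(abs_sub_le_iff.mp (h k hk)).2]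

theorem exp_neg_two_mul_mul_div_le_div_sum_exp (hT : T.Nonempty)
    (hxS : ∀ k ∈ S, |x k - x' k| ≤ t) (hxT : ∀ k ∈ T, |x k - x' k| ≤ t) :
    Real.exp (-2 * t) * ((∑ k ∈ S, Real.exp (x' k)) / ∑ k ∈ T, Real.exp (x' k)) ≤
      (∑ k ∈ S, Real.exp (x k)) / ∑ k ∈ T, Real.exp (x k) := by
  have hA : 0 < ∑ k ∈ T, Real.exp (x k) := sum_pos (fun k _ ↦ Real.exp_pos _) hT
  have hA' : 0 < ∑ k ∈ T, Real.exp (x' k) := sum_pos (fun k _ ↦ Real.exp_pos _) hT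
  have hS := exp_neg_mul_sum_exp_le hxS
  have hT' := exp_neg_mul_sum_exp_le (x := x') (x' := x) fun k hk ↦
    abs_sub_comm (x k) (x' k) ▸ hxT k hk
  rw [mul_div_assoc', div_le_div_iff₀ hA' hA]
  calc Real.exp (-2 * t) * (∑ k ∈ S, Real.exp (x' k)) * ∑ k ∈ T, Real.exp (x k)
      = Real.exp (-t) * (∑ k ∈ S, Real.exp (x' k)) *
          (Real.exp (-t) * ∑ k ∈ T, Real.exp (x k)) := by
        rw [show -2 * t = -t + -t by ring, Real.exp_add]; ring
    _ ≤ (∑ k ∈ S, Real.exp (x k)) * ∑ k ∈ T, Real.exp (x' k) := by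
        gcongr

theorem exp_neg_two_mul_mul_log_sum_exp_sub_le [DecidableEq ι] (hTS : T ⊆ S) (hT : T.Nonempty)
    (h : ∀ k ∈ S, |x k - x' k| ≤ t) :
    Real.exp (-2 * t) *
        (Real.log (∑ k ∈ S, Real.exp (x' k)) - Real.log (∑ k ∈ T, Real.exp (x' k))) ≤
      Real.log (∑ k ∈ S, Real.exp (x k)) - Real.log (∑ k ∈ T, Real.exp (x k)) := by
  have ht : 0 ≤ t := let ⟨k₀, hk₀⟩ := hT; (abs_nonneg _).trans (h k₀ (hTS hk₀))
  have hc₁ : Real.exp (-2 * t) ≤ 1 := Real.exp_le_one_iff.mpr (by linarith)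
  have hratio := exp_neg_two_mul_mul_div_le_div_sum_exp (S := S \ T) (x := x) (x' := x')
    hT (fun k hk ↦ h k (sdiff_subset hk)) fun k hk ↦ h k (hTS hk)
  have hy : 0 ≤ (∑ k ∈ S \ T, Real.exp (x' k)) / ∑ k ∈ T, Real.exp (x' k) := by positivity
  rw [log_sum_exp_sub_log_sum_exp hTS hT, log_sum_exp_sub_log_sum_exp hTS hT]
  calc _ ≤ Real.log (1 + Real.exp (-2 * t) *
          ((∑ k ∈ S \ T, Real.exp (x' k)) / ∑ k ∈ T, Real.exp (x' k))) :=
        Real.mul_log_one_add_le_log_one_add_mul (Real.exp_pos _).le hc₁ (by linarith)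
    _ ≤ _ := Real.log_le_log (by positivity) (by linarith)

end LogSumExp

theorem stmt15_general {d : ℕ} (μ s : ℝ) (hμ : 0 < μ)
    (u u' : Fin d → ℝ) (h : ∀ i, |u i - u' i| ≤ s) :
    ∀ i j : ℕ, 1 ≤ j → j ≤ i → i ≤ d →
      psmax μ i u - psmax μ j u ≥
        Real.exp (-(2 * s) / μ) * (psmax μ i u' - psmax μ j u') := by
  intro i j hj hji hid
  have hsub : univ.filter (fun k : Fin d ↦ (k : ℕ) < j) ⊆ univ.filter (fun k ↦ (k : ℕ) < i) :=
    fun k ↦ by simp only [mem_filter, mem_univ, true_and]; omega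
  have hne : (univ.filter (fun k : Fin d ↦ (k : ℕ) < j)).Nonempty :=
    ⟨⟨0, by omega⟩, by simp only [mem_filter, mem_univ, true_and]; omega⟩
  have hscaled : ∀ k, |u k / μ - u' k / μ| ≤ s / μ := fun k ↦ by
    rw [← sub_div, abs_div, abs_of_pos hμ]
    exact div_le_div_of_nonneg_right (h k) hμ.le
  have key := exp_neg_two_mul_mul_log_sum_exp_sub_le hsub hne fun k _ ↦ hscaled k
  rw [show -2 * (s / μ) = -(2 * s) / μ by ring] at key
  unfold psmax
  linarith [mul_le_mul_of_nonneg_left key hμ.le]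

/-- If `‖u − u'‖_∞ ≤ s` then for all `1 ≤ j ≤ i ≤ d`:
`smax^{≤i}_μ(u) − smax^{≤j}_μ(u) ≥ e^{−2s/μ}·(smax^{≤i}_μ(u') − smax^{≤j}_μ(u'))`. -/
theorem stmt15 {d : ℕ} (hd : 1 ≤ d) (μ s : ℝ) (hμ : 0 < μ) (hs : 0 ≤ s)
    (u u' : Fin d → ℝ) (h : ∀ i, |u i - u' i| ≤ s) :
    ∀ i j : ℕ, 1 ≤ j → j ≤ i → i ≤ d →
      psmax μ i u - psmax μ j u ≥
        Real.exp (-(2 * s) / μ) * (psmax μ i u' - psmax μ j u') :=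
  stmt15_general μ s hμ u u' h
end

section
/- Let p ∈ [2,∞), let q ≥ 1 and k ≥ 1 be integers, and let d be an integer with d ≥ 8k^{1+1/p} and d ≥ k. Let 0 < γ ≤ 1/(4k^{1+1/p}), set α := q + p/(p+1) and μ := γ/(4α·ln d). Let ξ ∈ {−1,+1}^d, and for i ∈ {1,…,k} define f_i : ℝ^d → ℝ by f_i(x) := μ·ln(Σ_{j=1}^i exp((ξ_j·x_j + (k−j)γ)/μ)) + μ(k+1−i)·d^{−α}. Let x* := −k^{−1/p}·Σ_{j=1}^k ξ_j·e_j, where e_j are the standard basis vectors. Then f_i(x*) ≤ −(1/4)·k^{−1/p} for every i ∈ {1,…,k}. -/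
/-!
Every coordinate `j < i ≤ k` of the sum contributes the same value `ξ_j x*_j = -k^{-1/p}` plus a
shift of at most `(k-1)γ`, so the soft maximum at temperature `μ` over these `i ≤ d` terms is at
most `-k^{-1/p} + (k-1)γ + μ ln d`. The choice of `μ` makes `μ ln d ≤ γ/4`, the term `μ(k+1-i)d^{-α}`
is at most `μ ≤ γ/4`, and `kγ ≤ k^{-1/p}/4` by the bound on `γ`; together this leaves
`f_i(x*) ≤ -(3/4)k^{-1/p}`.
-/

open Finset

namespace Real

theorem log_sum_exp_le {ι : Type*} {s : Finset ι} (hs : s.Nonempty) {a : ι → ℝ} {M : ℝ}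
    (h : ∀ j ∈ s, a j ≤ M) : log (∑ j ∈ s, exp (a j)) ≤ log #s + M := by
  have hsum : ∑ j ∈ s, exp (a j) ≤ #s * exp M := by
    simpa using sum_le_sum fun j hj => exp_le_exp.2 (h j hj)
  calc log (∑ j ∈ s, exp (a j)) ≤ log (#s * exp M) :=
        log_le_log (sum_pos (fun j _ => exp_pos _) hs) hsum
    _ = log #s + M := by
        rw [log_mul (by simpa using hs.ne_empty) (exp_ne_zero M), log_exp]

theorem mul_log_sum_exp_div_le {ι : Type*} {s : Finset ι} (hs : s.Nonempty) {b : ι → ℝ}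
    {M μ : ℝ} (hμ : 0 < μ) (h : ∀ j ∈ s, b j ≤ M) :
    μ * log (∑ j ∈ s, exp (b j / μ)) ≤ μ * log #s + M := by
  have := log_sum_exp_le hs fun j hj => div_le_div_of_nonneg_right (h j hj) hμ.le
  calc μ * log (∑ j ∈ s, exp (b j / μ)) ≤ μ * (log #s + M / μ) :=
        mul_le_mul_of_nonneg_left this hμ.le
    _ = μ * log #s + M := by field_simp

theorem log_natCast_le_log_natCast {m n : ℕ} (h : m ≤ n) : log m ≤ log n := by
  rcases m.eq_zero_or_pos with rfl | hm
  · simpa using log_natCast_nonneg n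
  · exact log_le_log (by exact_mod_cast hm) (by exact_mod_cast h)

theorem one_le_log_of_eight_mul_rpow_le {x r y : ℝ} (hx : 1 ≤ x) (hr : 0 ≤ r)
    (h : 8 * x ^ r ≤ y) : 1 ≤ log y := by
  have := one_le_rpow hx hr
  rw [le_log_iff_exp_le (by linarith)]
  linarith [exp_one_lt_d9]

theorem mul_le_rpow_neg_div {x γ c r : ℝ} (hx : 0 < x) (h : γ ≤ 1 / (c * x ^ (1 + r))) :
    x * γ ≤ x ^ (-r) / c := by
  have hxr : x ^ (-r) = x / x ^ (1 + r) := by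
    simpa using rpow_sub hx 1 (1 + r)
  calc x * γ ≤ x * (1 / (c * x ^ (1 + r))) := mul_le_mul_of_nonneg_left h hx.le
    _ = x ^ (-r) / c := by rw [hxr]; ring

theorem mul_mul_rpow_neg_le {μ a x α : ℝ} (hμ : 0 ≤ μ) (hax : a ≤ x)
    (hx : 1 ≤ x) (hα : 1 ≤ α) : μ * a * x ^ (-α) ≤ μ := by
  have hxα : x ^ (-α) ≤ x⁻¹ := by
    simpa [rpow_neg_one] using rpow_le_rpow_of_exponent_le hx (neg_le_neg hα)
  calc μ * a * x ^ (-α) ≤ μ * x * x⁻¹ := by gcongr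
    _ = μ := by field_simp

end Real

theorem div_mul_le_div_four {γ α y : ℝ} (hγ : 0 ≤ γ) (hα : 1 ≤ α) (hy : 0 < y) :
    γ / (4 * α * y) * y ≤ γ / 4 := by
  calc γ / (4 * α * y) * y = γ / (4 * α) := by field_simp
    _ ≤ γ / 4 := div_le_div_of_nonneg_left hγ (by norm_num) (by linarith)

/-- Lower-bound hard instance: the value of each `f_i` at the point
`x* = −k^{−1/p}·Σ_{j=1}^k ξ_j e_j` is at most `−(1/4)k^{−1/p}`. -/
theorem stmt17 (p : ℝ) (hp : 2 ≤ p) (q k d : ℕ) (hq : 1 ≤ q) (hk : 1 ≤ k)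
    (hd : 8 * (k : ℝ) ^ (1 + 1 / p) ≤ (d : ℝ)) (hdk : k ≤ d)
    (γ : ℝ) (hγ0 : 0 < γ) (hγ : γ ≤ 1 / (4 * (k : ℝ) ^ (1 + 1 / p)))
    (α μ : ℝ) (hα : α = (q : ℝ) + p / (p + 1))
    (hμ : μ = γ / (4 * α * Real.log d))
    (ξ : Fin d → ℝ) (hξ : ∀ j, ξ j = 1 ∨ ξ j = -1)
    (f : ℕ → (Fin d → ℝ) → ℝ)
    (hf : ∀ (i : ℕ) (x : Fin d → ℝ), f i x =
      μ * Real.log (∑ j ∈ univ.filter (fun j : Fin d => (j : ℕ) < i),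
          Real.exp ((ξ j * x j + ((k : ℝ) - 1 - (j : ℕ)) * γ) / μ)) +
        μ * ((k : ℝ) + 1 - (i : ℝ)) * (d : ℝ) ^ (-α))
    (xs : Fin d → ℝ)
    (hxs : ∀ j : Fin d, xs j = if (j : ℕ) < k then -(k : ℝ) ^ (-(1 / p)) * ξ j else 0) :
    ∀ i : ℕ, 1 ≤ i → i ≤ k → f i xs ≤ -(1 / 4) * (k : ℝ) ^ (-(1 / p)) := by
  intro i hi hik
  set K := (k : ℝ) ^ (-(1 / p))
  set s := univ.filter fun j : Fin d => (j : ℕ) < i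
  have hk0 : (0 : ℝ) < k := by exact_mod_cast hk
  have hlogd : 1 ≤ Real.log d :=
    Real.one_le_log_of_eight_mul_rpow_le (by exact_mod_cast hk) (by positivity) hd
  have hα1 : 1 ≤ α := by
    have : (1 : ℝ) ≤ q := by exact_mod_cast hq
    rw [hα]
    linarith [show 0 ≤ p / (p + 1) by positivity]
  have hμ0 : 0 < μ := by rw [hμ]; positivity
  have hμlogd : μ * Real.log d ≤ γ / 4 := hμ ▸ div_mul_le_div_four hγ0.le hα1 (by linarith)
  have hs : s.Nonempty := ⟨⟨0, by omega⟩, mem_filter.2 ⟨mem_univ _, hi⟩⟩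
  have hsoft : μ * Real.log (∑ j ∈ s, Real.exp ((ξ j * xs j + ((k : ℝ) - 1 - (j : ℕ)) * γ) / μ))
      ≤ μ * Real.log #s + (-K + ((k : ℝ) - 1) * γ) := by
    refine Real.mul_log_sum_exp_div_le hs hμ0 fun j hj => ?_
    have hjk : (j : ℕ) < k := (mem_filter.1 hj).2.trans_le hik
    have hx : ξ j * xs j = -K := by
      rw [hxs j, if_pos hjk]
      rcases hξ j with h | h <;> rw [h] <;> ring
    rw [hx]
    nlinarith [show (0 : ℝ) ≤ (j : ℕ) by positivity]
  have hcard : Real.log #s ≤ Real.log d :=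
    Real.log_natCast_le_log_natCast ((card_le_univ s).trans_eq (Fintype.card_fin d))
  have htail : μ * ((k : ℝ) + 1 - i) * (d : ℝ) ^ (-α) ≤ μ := by
    have hi' : (1 : ℝ) ≤ i := by exact_mod_cast hi
    have hkd : (k : ℝ) ≤ d := by exact_mod_cast hdk
    exact Real.mul_mul_rpow_neg_le hμ0.le (by linarith) (by exact_mod_cast hk.trans hdk) hα1
  rw [hf]
  linarith [Real.mul_le_rpow_neg_div hk0 hγ, mul_le_mul_of_nonneg_left hcard hμ0.le,
    mul_le_mul_of_nonneg_left hlogd hμ0.le, show 0 < K by positivity]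
end

section
/- Let μ > 0, let d ≥ 2 and 1 ≤ n < d, and let x ∈ ℝ^d. Define smax_μ(x) := μ·ln(Σ_{i=1}^d e^{x_i/μ}) and smax^{≤n}_μ(x) := μ·ln(Σ_{i=1}^n e^{x_i/μ}), and regard ∇smax^{≤n}_μ(x) as a vector in ℝ^d whose coordinates with index larger than n are zero. If δ := (1/μ)·(smax_μ(x) − smax^{≤n}_μ(x)) satisfies δ < 1, then ‖∇smax_μ(x) − ∇smax^{≤n}_μ(x)‖_1 ≤ 4δ. -/
/-!
The gradients are the normalized weights `wᵢ / S` and `wᵢ / T`, where `wᵢ = exp(xᵢ/μ)`,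
`S` sums all weights and `T` only the first `n`. Their ℓ₁ distance is exactly
`2 (1 - T/S)`: the first `n` coordinates lose `1 - T/S` of mass, which reappears on the
remaining ones. Since `δ = log (S/T)`, the elementary bound `1 - 1/y ≤ log y` gives
`2 (1 - T/S) ≤ 2δ ≤ 4δ`.
-/

open Finset Real

section Normalize

variable {ι : Type*} [Fintype ι] (w : ι → ℝ) (p : ι → Prop) [DecidablePred p]

lemma sum_filter_le_sum_of_nonneg (hw : ∀ i, 0 ≤ w i) :
    ∑ i with p i, w i ≤ ∑ i, w i :=
  sum_le_sum_of_subset_of_nonneg (filter_subset _ _) fun i _ _ => hw i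

lemma sum_abs_div_sum_sub_ite_div_sum_filter (hw : ∀ i, 0 ≤ w i)
    (hT : 0 < ∑ i with p i, w i) :
    ∑ i, |w i / ∑ j, w j - (if p i then w i / ∑ j with p j, w j else 0)| =
      2 * (1 - (∑ i with p i, w i) / ∑ i, w i) := by
  set S := ∑ i, w i
  set T := ∑ i with p i, w i
  have hTS : T ≤ S := sum_filter_le_sum_of_nonneg w p hw
  have hS : 0 < S := hT.trans_le hTS
  have hrest : ∑ i with ¬p i, w i = S - T :=
    eq_sub_of_add_eq' (sum_filter_add_sum_filter_not univ p w)
  have hterm : ∀ i, |w i / S - (if p i then w i / T else 0)| =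
      if p i then w i / T - w i / S else w i / S := by
    intro i
    split_ifs
    · rw [abs_sub_comm, abs_of_nonneg (sub_nonneg.2 (div_le_div_of_nonneg_left (hw i) hT hTS))]
    · rw [sub_zero, abs_of_nonneg (div_nonneg (hw i) hS.le)]
  rw [sum_congr rfl fun i _ => hterm i, sum_ite, sum_sub_distrib, ← sum_div, ← sum_div,
    ← sum_div, hrest, div_self hT.ne']
  field_simp
  ring

end Normalize

lemma one_sub_div_le_log_sub_log {S T : ℝ} (hS : 0 < S) (hT : 0 < T) :
    1 - T / S ≤ log S - log T := by
  simpa [← log_div hS.ne' hT.ne'] using one_sub_inv_le_log_of_pos (div_pos hS hT)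

theorem stmt18_general {d : ℕ} (μ : ℝ) (hμ : 0 < μ)
    (n : ℕ) (hn1 : 1 ≤ n) (hnd : n < d) (x : Fin d → ℝ) (δ : ℝ)
    (hδdef : δ = (1 / μ) *
      ((μ * Real.log (∑ i, Real.exp (x i / μ))) -
        (μ * Real.log (∑ i ∈ univ.filter (fun i : Fin d => (i : ℕ) < n),
          Real.exp (x i / μ))))) :
    ∑ i, |Real.exp (x i / μ) / (∑ j, Real.exp (x j / μ)) -
        (if (i : ℕ) < n then
          Real.exp (x i / μ) /
            (∑ j ∈ univ.filter (fun j : Fin d => (j : ℕ) < n), Real.exp (x j / μ))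
        else 0)| ≤ 4 * δ := by
  have hw : ∀ i : Fin d, 0 ≤ exp (x i / μ) := fun i => (exp_pos _).le
  have hT : 0 < ∑ i ∈ univ.filter (fun i : Fin d => (i : ℕ) < n), exp (x i / μ) :=
    sum_pos (fun i _ => exp_pos _) ⟨⟨0, by omega⟩, mem_filter.2 ⟨mem_univ _, hn1⟩⟩
  have hTS := sum_filter_le_sum_of_nonneg _ (fun i : Fin d => (i : ℕ) < n) hw
  rw [← mul_sub, one_div, inv_mul_cancel_left₀ hμ.ne'] at hδdef
  rw [sum_abs_div_sum_sub_ite_div_sum_filter _ _ hw hT]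
  have hgap := one_sub_div_le_log_sub_log (hT.trans_le hTS) hT
  have hδ0 : 0 ≤ δ := hδdef ▸ sub_nonneg.2 (log_le_log hT hTS)
  linarith

/-- If the gap `δ = (1/μ)(smax_μ(x) − smax^{≤n}_μ(x))` between the softmax and the
partial softmax is less than 1, then the ℓ₁ distance between their gradients is at
most `4δ` (where the gradient of the partial softmax is regarded as a vector in ℝ^d
with zero coordinates for indices larger than `n`). -/
theorem stmt18 {d : ℕ} (hd : 2 ≤ d) (μ : ℝ) (hμ : 0 < μ)
    (n : ℕ) (hn1 : 1 ≤ n) (hnd : n < d) (x : Fin d → ℝ) (δ : ℝ)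
    (hδdef : δ = (1 / μ) *
      ((μ * Real.log (∑ i, Real.exp (x i / μ))) -
        (μ * Real.log (∑ i ∈ univ.filter (fun i : Fin d => (i : ℕ) < n),
          Real.exp (x i / μ)))))
    (hδ : δ < 1) :
    ∑ i, |Real.exp (x i / μ) / (∑ j, Real.exp (x j / μ)) -
        (if (i : ℕ) < n then
          Real.exp (x i / μ) /
            (∑ j ∈ univ.filter (fun j : Fin d => (j : ℕ) < n), Real.exp (x j / μ))
        else 0)| ≤ 4 * δ :=
  stmt18_general μ hμ n hn1 hnd x δ hδdef
end

section
/- Let ‖·‖ be a norm on ℝ^n, let f : ℝ^n → ℝ be convex with a global minimizer x*, let λ > 0 and c ≥ 1/λ. Let (x_k)_{k≥0} be a sequence in ℝ^n such that for every k ≥ 0, x_{k+1} is a global minimizer of y ↦ f(y) + (1/(2λ))‖x_k − y‖². Let T ≥ 1 and let R > 0 satisfy ‖x_k − x*‖ ≤ R for all 0 ≤ k ≤ T+2. Then f(x_{T+2}) − f(x*) ≤ 4cR²/(T+2). -/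
private lemma stmt19_aux (K b : ℝ) (hK : 0 ≤ K) (hb0 : 0 ≤ b) (hb : b ≤ 2/(K+4)) :
    b - b^2/2 ≤ 2/(K+5) := by
  have h4 : (0:ℝ) < K + 4 := by linarith
  have h5 : (0:ℝ) < K + 5 := by linarith
  set m : ℝ := 2/(K+4) with hmdef
  have hm12 : m ≤ 1/2 := by
    rw [hmdef, div_le_div_iff₀ h4 (by norm_num)]; linarith
  have hmK : m - m^2/2 ≤ 2/(K+5) := by
    rw [hmdef, div_pow, div_div, div_sub_div _ _ (ne_of_gt h4) (by positivity),
      div_le_div_iff₀ (by positivity) h5]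
    nlinarith [sq_nonneg K, hK]
  nlinarith [mul_nonneg (sub_nonneg.2 hb) (show (0:ℝ) ≤ 2 - (m + b) by linarith)]

/-- Unaccelerated proximal point rate: if `f` is convex with global minimizer `x*`,
`λ > 0`, `c ≥ 1/λ`, each `x_{k+1}` is a global minimizer of
`y ↦ f(y) + (1/(2λ))‖x_k − y‖²`, and `‖x_k − x*‖ ≤ R` for all `k ≤ T+2`, then
`f(x_{T+2}) − f(x*) ≤ 4cR²/(T+2)`. -/
theorem stmt19 {n : ℕ} (N : (Fin n → ℝ) → ℝ)
    (hN_triangle : ∀ x y, N (x + y) ≤ N x + N y)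
    (hN_smul : ∀ (a : ℝ) (x : Fin n → ℝ), N (a • x) = |a| * N x)
    (hN_def : ∀ x, N x = 0 ↔ x = 0)
    (f : (Fin n → ℝ) → ℝ) (hf : ConvexOn ℝ Set.univ f)
    (xs : Fin n → ℝ) (hxs : ∀ z, f xs ≤ f z)
    (lam c : ℝ) (hlam : 0 < lam) (hc : 1 / lam ≤ c)
    (x : ℕ → Fin n → ℝ)
    (hx : ∀ k : ℕ, ∀ y, f (x (k + 1)) + 1 / (2 * lam) * N (x k - x (k + 1)) ^ 2 ≤
      f y + 1 / (2 * lam) * N (x k - y) ^ 2)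
    (T : ℕ) (hT : 1 ≤ T) (R : ℝ) (hR : 0 < R)
    (hRb : ∀ k : ℕ, k ≤ T + 2 → N (x k - xs) ≤ R) :
    f (x (T + 2)) - f xs ≤ 4 * c * R ^ 2 / ((T : ℝ) + 2) := by
  -- N is nonnegative
  have hN0 : ∀ v : Fin n → ℝ, 0 ≤ N v := by
    intro v
    have h1 : N (-v) = N v := by
      have := hN_smul (-1) v
      simpa using this
    have h2 := hN_triangle v (-v)
    have h3 : N (0 : Fin n → ℝ) = 0 := (hN_def 0).2 rfl
    rw [add_neg_cancel, h3, h1] at h2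
    linarith
  -- key descent inequality
  have key : ∀ k : ℕ, k ≤ T + 2 → ∀ t : ℝ, 0 ≤ t → t ≤ 1 →
      f (x (k+1)) - f xs ≤ (1 - t) * (f (x k) - f xs) + t^2 * R^2 / (2*lam) := by
    intro k hk t ht0 ht1
    set y := (1 - t) • x k + t • xs with hy
    have hxy : x k - y = t • (x k - xs) := by
      rw [hy]; module
    have h1 := hx k y
    have hNy : N (x k - y) ≤ t * R := by
      rw [hxy, hN_smul, abs_of_nonneg ht0]
      exact mul_le_mul_of_nonneg_left (hRb k hk) ht0
    have hfy : f y ≤ (1 - t) * f (x k) + t * f xs := by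
      have := hf.2 (Set.mem_univ (x k)) (Set.mem_univ xs)
        (show (0:ℝ) ≤ 1 - t by linarith) ht0 (by ring)
      simpa [smul_eq_mul] using this
    have hNsq : N (x k - y)^2 ≤ (t*R)^2 := pow_le_pow_left₀ (hN0 _) hNy 2
    have hnn : 0 ≤ 1/(2*lam) * N (x k - x (k+1))^2 := by positivity
    have hstep : f (x (k+1)) ≤ (1-t)*f (x k) + t * f xs + 1/(2*lam)*(t*R)^2 := by
      have hmul : 1/(2*lam) * N (x k - y)^2 ≤ 1/(2*lam) * (t*R)^2 :=
        mul_le_mul_of_nonneg_left hNsq (by positivity)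
      linarith [h1]
    calc f (x (k+1)) - f xs
        ≤ (1-t)*f (x k) + t*f xs + 1/(2*lam)*(t*R)^2 - f xs := by linarith
      _ = (1 - t) * (f (x k) - f xs) + t^2 * R^2 / (2*lam) := by ring
  -- main induction
  have main : ∀ j : ℕ, j + 1 ≤ T + 2 →
      f (x (j+1)) - f xs ≤ 2 * R^2 / (lam * ((j:ℝ) + 4)) := by
    intro j
    induction j with
    | zero =>
      intro _
      have h := key 0 (by omega) 1 zero_le_one le_rfl
      have he : ((0:ℕ):ℝ) = 0 := by norm_num
      rw [he]
      calc f (x (0+1)) - f xs ≤ (1-1)*(f (x 0) - f xs) + 1^2*R^2/(2*lam) := h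
        _ = 2*R^2/(lam*((0:ℝ)+4)) := by ring
    | succ j ih =>
      intro hj
      have hj' : j + 1 ≤ T + 2 := by omega
      have hD := ih hj'
      set D := f (x (j+1)) - f xs with hDdef
      have hD0 : 0 ≤ D := sub_nonneg.2 (hxs _)
      set t : ℝ := lam * D / R^2 with htdef
      have ht0 : 0 ≤ t := by positivity
      have hKj : (0:ℝ) ≤ (j:ℝ) := Nat.cast_nonneg j
      have hbb : t ≤ 2/((j:ℝ)+4) := by
        rw [htdef, div_le_div_iff₀ (by positivity) (by linarith)]
        rw [le_div_iff₀ (by positivity)] at hD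
        nlinarith [hD]
      have ht1 : t ≤ 1 := by
        have : 2/((j:ℝ)+4) ≤ 1 := by
          rw [div_le_one (by linarith)]; linarith
        linarith
      have hk := key (j+1) (by omega) t ht0 ht1
      have haux : t - t^2/2 ≤ 2/((j:ℝ)+5) := stmt19_aux _ _ hKj ht0 hbb
      have hrhs : (1-t)*D + t^2*R^2/(2*lam) = (R^2/lam) * (t - t^2/2) := by
        rw [htdef]; field_simp; ring
      calc f (x (j+1+1)) - f xs ≤ (1-t)*D + t^2*R^2/(2*lam) := hk
        _ = (R^2/lam) * (t - t^2/2) := hrhs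
        _ ≤ (R^2/lam) * (2/((j:ℝ)+5)) :=
            mul_le_mul_of_nonneg_left haux (by positivity)
        _ = 2 * R^2 / (lam * (((j+1 : ℕ) : ℝ) + 4)) := by
            push_cast; field_simp; ring
  -- conclude
  have hfin := main (T+1) (by omega)
  have he : T + 1 + 1 = T + 2 := by omega
  rw [he] at hfin
  have hfin' : f (x (T + 2)) - f xs ≤ 2 * R^2 / (lam * ((T:ℝ) + 5)) := by
    have : (((T:ℕ)+1:ℕ):ℝ) + 4 = (T:ℝ) + 5 := by push_cast; ring
    rwa [this] at hfin
  have hcl : 1 ≤ c * lam := by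
    rw [div_le_iff₀ hlam] at hc; linarith
  have hT' : (1:ℝ) ≤ (T:ℝ) := by exact_mod_cast hT
  have hfinal : 2 * R^2 / (lam * ((T:ℝ) + 5)) ≤ 4 * c * R^2 / ((T:ℝ) + 2) := by
    rw [div_le_div_iff₀ (by positivity) (by linarith)]
    nlinarith [mul_nonneg (mul_nonneg (sq_nonneg R) (sub_nonneg.2 hcl))
        (show (0:ℝ) ≤ (T:ℝ)+5 by linarith),
      mul_nonneg (sq_nonneg R) (show (0:ℝ) ≤ (T:ℝ) by linarith)]
  linarith
end
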